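/- Let t₁,…,t_r be indeterminates and Δ₀(t) = ∏_{1≤i<j≤r}(t_j − t_i) the Vandermonde determinant. Then σ₊(t₁)X^0 ∧ σ₊(t₂)X^0 ∧ ⋯ ∧ σ₊(t_r)X^0 = Δ₀(t) · ∑_{λ ∈ 𝒫_r} X^r(λ) s_λ(t₁,…,t_r) in ⋀^r ℚ[X]⟦t₁,…,t_r⟧, where s_λ is the Schur polynomial and the sum is over partitions of length at most r. Equivalently, the formal series 𝐗(t_r) ∧ ⋯ ∧ 𝐗(t₁) with 𝐗(z) = ∑_{i≥0}X^i z^i is divisible by Δ₀(t) with quotient having coefficients the Schur polynomials. -/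

import Mathlib

/-!
The coefficient of `t^d` in `𝐗(t₁) ∧ ⋯ ∧ 𝐗(t_r)` is `X^{d₁} ∧ ⋯ ∧ X^{d_r}`, since each factor
involves a single variable. Expanding the bialternant, the coefficient of `t^d` in
`det(t_i^{λ_j + r - j})` is the signed count of permutations `σ` with `d ∘ σ = λ + δ`, where
`δ = (r - 1, …, 1, 0)`. If `d` has a repeated entry, both sides vanish. Otherwise there is exactly
one such pair `(λ, σ)`: `σ` sorts `d` decreasingly and `λ = d ∘ σ - δ`; for it
`sign σ • X^r(λ) = X^{d₁} ∧ ⋯ ∧ X^{d_r}` by antisymmetry of the wedge product.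
-/

noncomputable section

/-- `V = ℚ[X]`. -/
abbrev V : Type := ℕ →₀ ℚ

abbrev A : Type := ExteriorAlgebra ℚ V

def Xp (i : ℕ) : A := ExteriorAlgebra.ι ℚ (Finsupp.single i 1)

/-- `X^r(λ) = X^{r−1+λ₁} ∧ ⋯ ∧ X^{λ_r}`. -/
def Xr (r : ℕ) (l : Fin r → ℕ) : A :=
  ((List.finRange r).map fun k : Fin r => Xp (r - 1 - k.val + l k)).prod

/-- `𝐗(t_i) = σ₊(t_i)X^0 = ∑_{n≥0} X^n t_i^n`, as an element of `⋀V⟦t₁,…,t_r⟧`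
(an `MvPowerSeries` with coefficients in `⋀V`): its coefficient at a monomial `d`
is `X^{d(i)}` if `d` is supported at `i`, and `0` otherwise. -/
def F (r : ℕ) (i : Fin r) : MvPowerSeries (Fin r) A :=
  (fun d => if d = Finsupp.single i (d i) then Xp (d i) else 0 : MvPowerSeries (Fin r) A)

/-- The finite set of partitions (antitone tuples) of length ≤ r with all parts ≤ N. -/
def partFinset (r N : ℕ) : Finset (Fin r → ℕ) :=
  (Fintype.piFinset fun _ : Fin r => Finset.range (N + 1)).filter
    fun l => ∀ i j : Fin r, i ≤ j → l j ≤ l i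

/-- The Jacobi bialternant `det(t_i^{λ_j + r − j})_{1≤i,j≤r} = Δ₀(t)·s_λ(t₁,…,t_r)`,
where `s_λ` is the Schur polynomial and `Δ₀(t) = ∏_{i<j}(t_j − t_i)`. -/
def bialt (r : ℕ) (l : Fin r → ℕ) : MvPolynomial (Fin r) ℚ :=
  Matrix.det (Matrix.of fun i j : Fin r =>
    (MvPolynomial.X i : MvPolynomial (Fin r) ℚ) ^ (l j + (r - 1 - (j : ℕ))))

namespace MvPowerSeries

variable {σ R : Type*} [Semiring R] [DecidableEq σ]

open Finsupp in
theorem coeff_mul_of_supported_on_axis {f g : MvPowerSeries σ R} {i : σ}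
    (hf : ∀ u, coeff u f ≠ 0 → u = single i (u i)) (hg : ∀ v, v i ≠ 0 → coeff v g = 0)
    (d : σ →₀ ℕ) : coeff d (f * g) = coeff (single i (d i)) f * coeff (d.erase i) g := by
  rw [coeff_mul, Finset.sum_eq_single_of_mem (single i (d i), d.erase i)
    (Finset.HasAntidiagonal.mem_antidiagonal.2 (single_add_erase i d))]
  rintro ⟨u, v⟩ huv hne
  rw [Finset.HasAntidiagonal.mem_antidiagonal] at huv
  by_cases hu : coeff u f = 0
  · rw [hu, zero_mul]
  rw [hg v, mul_zero]
  intro hv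
  have hu' := hf u hu
  have hui : u i = d i := by simpa [hv] using DFunLike.congr_fun huv i
  refine hne (Prod.ext (hu'.trans (by rw [hui])) ?_)
  ext j
  have huvj := DFunLike.congr_fun huv j
  rcases eq_or_ne j i with rfl | hj
  · simp [hv]
  · have huj : u j = 0 := by rw [hu', single_apply, if_neg (Ne.symm hj)]
    simp only [coe_add, Pi.add_apply, huj, zero_add] at huvj
    simp [erase_ne hj, huvj]

open Finsupp in
theorem coeff_list_prod_of_supported_on_axis (f : σ → MvPowerSeries σ R)
    (hf : ∀ i u, coeff u (f i) ≠ 0 → u = single i (u i)) {L : List σ} (hL : L.Nodup)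
    (d : σ →₀ ℕ) :
    coeff d (L.map f).prod =
      if d.support ⊆ L.toFinset then (L.map fun i => coeff (single i (d i)) (f i)).prod else 0 := by
  induction L generalizing d with
  | nil =>
    simp only [List.map_nil, List.prod_nil, coeff_one, List.toFinset_nil, Finset.subset_empty,
      support_eq_empty]
  | cons i L ih =>
    obtain ⟨hi, hL⟩ := List.nodup_cons.1 hL
    have hg : ∀ v : σ →₀ ℕ, v i ≠ 0 → coeff v (L.map f).prod = 0 := fun v hv => by
      rw [ih hL, if_neg fun h => hi (List.mem_toFinset.1 (h (mem_support_iff.2 hv)))]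
    have hmap : (L.map fun j => coeff (single j (d.erase i j)) (f j)) =
        L.map fun j => coeff (single j (d j)) (f j) :=
      List.map_congr_left fun j hj => by rw [erase_ne (ne_of_mem_of_not_mem hj hi)]
    have hcond : (d.erase i).support ⊆ L.toFinset ↔ d.support ⊆ (i :: L).toFinset := by
      rw [support_erase, List.toFinset_cons, Finset.subset_insert_iff]
    rw [List.map_cons, List.prod_cons, coeff_mul_of_supported_on_axis (hf i) hg, ih hL, hmap,
      List.map_cons, List.prod_cons]
    simp only [hcond, mul_ite, mul_zero]

end MvPowerSeries

open MvPolynomial in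
theorem coeff_det_X_pow {ι R : Type*} [Fintype ι] [DecidableEq ι] [CommRing R]
    (e : ι → ℕ) (d : ι →₀ ℕ) :
    coeff d (Matrix.of fun i j => (X i : MvPolynomial ι R) ^ e j).det =
      ∑ σ : Equiv.Perm ι, if ⇑d ∘ σ = e then (Equiv.Perm.sign σ : R) else 0 := by
  rw [Matrix.det_apply, coeff_sum]
  refine Finset.sum_congr rfl fun σ _ => ?_
  set m : ι →₀ ℕ := ∑ i, Finsupp.single (σ i) (e i)
  have hm : ∀ i, m (σ i) = e i := fun i => by
    simp [m, Finsupp.finsetSum_apply, Finsupp.single_apply, σ.injective.eq_iff]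
  have hprod :
      ∏ i, (Matrix.of fun i j => (X i : MvPolynomial ι R) ^ e j) (σ i) i = monomial m 1 := by
    simp only [Matrix.of_apply, X_pow_eq_monomial, m, monomial_sum_one]
  have hmd : m = d ↔ ⇑d ∘ σ = e := by
    refine ⟨fun h => funext fun i => by rw [← hm, h]; rfl, fun h => Finsupp.ext fun j => ?_⟩
    rw [← σ.apply_symm_apply j, hm, ← h, Function.comp_apply]
  rw [hprod, coeff_smul, coeff_monomial]
  simp only [hmd]
  split_ifs <;> simp [Units.smul_def]

theorem Tuple.exists_perm_strictAnti {n : ℕ} {α : Type*} [LinearOrder α] {f : Fin n → α}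
    (hf : Function.Injective f) : ∃ σ : Equiv.Perm (Fin n), StrictAnti (f ∘ σ) :=
  ⟨Tuple.sort (OrderDual.toDual ∘ f),
    (monotone_toDual_comp_iff.1 (Tuple.monotone_sort (OrderDual.toDual ∘ f)))
      |>.strictAnti_of_injective (hf.comp (Equiv.injective _))⟩

theorem Fin.sub_le_of_strictAnti {r : ℕ} {e : Fin r → ℕ} (he : StrictAnti e) (k : Fin r) :
    r - 1 - k ≤ e k := by
  rw [← Fin.card_Ioi]
  calc (Finset.Ioi k).card ≤ (Finset.range (e k)).card :=
        Finset.card_le_card_of_injOn e (fun j hj => by simpa using he (Finset.mem_Ioi.1 hj))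
          he.injective.injOn
    _ = e k := Finset.card_range _

def Xwedge {r : ℕ} (n : Fin r → ℕ) : A :=
  ExteriorAlgebra.ιMulti ℚ r fun k => Finsupp.single (n k) 1

theorem Xwedge_eq_prod {r : ℕ} (n : Fin r → ℕ) :
    Xwedge n = ((List.finRange r).map fun k => Xp (n k)).prod := by
  rw [Xwedge, ExteriorAlgebra.ιMulti_apply, List.ofFn_eq_map]
  rfl

theorem Xwedge_comp_perm {r : ℕ} (n : Fin r → ℕ) (σ : Equiv.Perm (Fin r)) :
    Xwedge (n ∘ σ) = Equiv.Perm.sign σ • Xwedge n :=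
  (ExteriorAlgebra.ιMulti ℚ r).map_perm (fun k => Finsupp.single (n k) 1) σ

theorem Xwedge_eq_zero {r : ℕ} {n : Fin r → ℕ} (hn : ¬ Function.Injective n) : Xwedge n = 0 :=
  AlternatingMap.map_eq_zero_of_not_injective _ _ fun h => hn fun a b hab => h (by simp [hab])

theorem coeff_prod_F {r : ℕ} (d : Fin r →₀ ℕ) :
    MvPowerSeries.coeff d ((List.finRange r).map (F r)).prod = Xwedge d := by
  have hF : ∀ i u, MvPowerSeries.coeff u (F r i) ≠ 0 → u = Finsupp.single i (u i) :=
    fun i u hu => by_contra fun h => hu (by simp [F, MvPowerSeries.coeff_apply, h])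
  rw [MvPowerSeries.coeff_list_prod_of_supported_on_axis _ hF (List.nodup_finRange r),
    if_pos (by simp), Xwedge_eq_prod]
  congr 1
  exact List.map_congr_left fun i _ => by simp [F, MvPowerSeries.coeff_apply]

def addStaircase (r : ℕ) (l : Fin r → ℕ) : Fin r → ℕ := fun k => l k + (r - 1 - k)

theorem Xr_eq_Xwedge (r : ℕ) (l : Fin r → ℕ) : Xr r l = Xwedge (addStaircase r l) := by
  simp only [Xwedge_eq_prod, Xr, addStaircase, add_comm]

theorem addStaircase_injective (r : ℕ) : Function.Injective (addStaircase r) :=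
  fun _ _ h => funext fun k => Nat.add_right_cancel (congrFun h k)

theorem strictAnti_addStaircase_iff {r : ℕ} {l : Fin r → ℕ} :
    StrictAnti (addStaircase r l) ↔ Antitone l := by
  cases r with
  | zero => exact iff_of_true (fun a => a.elim0) (fun a => a.elim0)
  | succ r =>
    rw [Fin.strictAnti_iff_succ_lt, Fin.antitone_iff_succ_le]
    refine forall_congr' fun i => ?_
    simp only [addStaircase, Fin.val_succ, Fin.val_castSucc]
    omega

theorem exists_addStaircase_eq {r : ℕ} {e : Fin r → ℕ} (he : StrictAnti e) :
    ∃ l, Antitone l ∧ l ≤ e ∧ addStaircase r l = e := by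
  have he_eq : addStaircase r (fun k => e k - (r - 1 - k)) = e :=
    funext fun k => Nat.sub_add_cancel (Fin.sub_le_of_strictAnti he k)
  exact ⟨_, strictAnti_addStaircase_iff.1 (he_eq.symm ▸ he), fun k => Nat.sub_le _ _, he_eq⟩

theorem eq_of_comp_perm_eq_addStaircase {r : ℕ} {d : Fin r → ℕ} (hd : Function.Injective d)
    {l l' : Fin r → ℕ} {σ σ' : Equiv.Perm (Fin r)} (hl : Antitone l) (hl' : Antitone l')
    (h : d ∘ σ = addStaircase r l) (h' : d ∘ σ' = addStaircase r l') : l = l' ∧ σ = σ' := by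
  have hσ : d ∘ σ = d ∘ σ' := Tuple.unique_antitone
    (h ▸ (strictAnti_addStaircase_iff.2 hl).antitone)
    (h' ▸ (strictAnti_addStaircase_iff.2 hl').antitone)
  exact ⟨addStaircase_injective r (h.symm.trans (hσ.trans h')),
    Equiv.ext fun x => hd (congrFun hσ x)⟩

theorem coeff_bialt_smul_Xr (r : ℕ) (l : Fin r → ℕ) (d : Fin r →₀ ℕ) :
    MvPolynomial.coeff d (bialt r l) • Xr r l =
      ∑ σ : Equiv.Perm (Fin r), if ⇑d ∘ σ = addStaircase r l then Xwedge d else 0 := by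
  rw [show bialt r l = (Matrix.of fun i j => MvPolynomial.X i ^ addStaircase r l j).det from rfl,
    coeff_det_X_pow, Finset.sum_smul]
  refine Finset.sum_congr rfl fun σ _ => ?_
  split_ifs with h
  · rw [Xr_eq_Xwedge, ← h, Xwedge_comp_perm, Int.cast_smul_eq_zsmul, ← Units.smul_def, smul_smul,
      Int.units_mul_self, one_smul]
  · exact zero_smul _ _

/-- `σ₊(t₁)X^0 ∧ σ₊(t₂)X^0 ∧ ⋯ ∧ σ₊(t_r)X^0 = Δ₀(t)·∑_{λ∈𝒫_r} X^r(λ) s_λ(t₁,…,t_r)`,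
stated coefficientwise: the coefficient of a monomial `d` of the wedge product equals
`∑_λ (coefficient of `d` in `Δ₀·s_λ = det(t_i^{λ_j+r−j})`) • X^r(λ)`, the sum being over
the (finitely many contributing) partitions with parts bounded by the degree of `d`. -/
theorem wedge_generating_function (r : ℕ) :
    ∀ d : Fin r →₀ ℕ,
      MvPowerSeries.coeff (R := A) d (((List.finRange r).map (F r)).prod) =
        ∑ l ∈ partFinset r (d.sum fun _ n => n),
          (MvPolynomial.coeff d (bialt r l)) • Xr r l := by
  intro d
  simp only [coeff_prod_F, coeff_bialt_smul_Xr]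
  by_cases hd : Function.Injective d
  · obtain ⟨σ₀, hσ₀⟩ := Tuple.exists_perm_strictAnti hd
    obtain ⟨l₀, hl₀, hl₀_le, hl₀σ₀⟩ := exists_addStaircase_eq hσ₀
    have hmem : l₀ ∈ partFinset r (d.sum fun _ n => n) :=
      Finset.mem_filter.2 ⟨Fintype.mem_piFinset.2 fun k => Finset.mem_range_succ_iff.2
        ((hl₀_le k).trans (Finsupp.le_degree _ d)), hl₀⟩
    have huniq : ∀ l ∈ partFinset r (d.sum fun _ n => n), ∀ σ : Equiv.Perm (Fin r),
        ⇑d ∘ σ = addStaircase r l → l = l₀ ∧ σ = σ₀ := fun l hl σ h =>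
      eq_of_comp_perm_eq_addStaircase hd (Finset.mem_filter.1 hl).2 hl₀ h hl₀σ₀.symm
    rw [Finset.sum_eq_single_of_mem l₀ hmem, Fintype.sum_eq_single σ₀, if_pos hl₀σ₀.symm]
    · exact fun σ hσ => if_neg fun h => hσ (huniq l₀ hmem σ h).2
    · exact fun l hl hne => Finset.sum_eq_zero fun σ _ => if_neg fun h => hne (huniq l hl σ h).1
  · simp [Xwedge_eq_zero hd]
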